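/- arXiv:0902.3036 — 3 statements merged into one kernel-verified Lean document; each statement's English description precedes it below -/
import Mathlib

section
/- For every real α ≥ 2, the function f_α(x) = (α + √(1−x²)) · (arcsin x)/x is strictly increasing on (0, 1]. -/
/-!
Write `θ = arcsin x ∈ (0, π/2)`, so that `x = sin θ` and `√(1 - x²) = cos θ`. Then
`f_α'(x) · x² cos θ = α (sin θ - θ cos θ) + (sin θ cos θ - θ)`. The first bracket is positive
(`θ < tan θ`), so for `α ≥ 2` this is at least `sin θ (2 + cos θ) - θ (1 + 2 cos θ)`, which is
positive on `(0, π]` because it vanishes at `0` and has derivative `2 sin θ (θ - sin θ)`.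
-/

open Real Set

namespace Real

lemma hasDerivAt_sin_mul_two_add_cos_sub_mul_one_add_two_mul_cos (t : ℝ) :
    HasDerivAt (fun t => sin t * (2 + cos t) - t * (1 + 2 * cos t))
      (2 * sin t * (t - sin t)) t := by
  refine ((hasDerivAt_sin t).mul ((hasDerivAt_const t 2).add (hasDerivAt_cos t))).sub
    ((hasDerivAt_id t).mul ((hasDerivAt_const t 1).add ((hasDerivAt_cos t).const_mul 2)))
    |>.congr_deriv ?_
  simp only [Pi.add_apply, id]
  linear_combination sin_sq_add_cos_sq t

lemma mul_one_add_two_mul_cos_lt_sin_mul_two_add_cos {θ : ℝ} (h0 : 0 < θ) (hπ : θ ≤ π) :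
    θ * (1 + 2 * cos θ) < sin θ * (2 + cos θ) := by
  have hmono : StrictMonoOn (fun t => sin t * (2 + cos t) - t * (1 + 2 * cos t)) (Icc 0 π) := by
    refine strictMonoOn_of_deriv_pos (convex_Icc 0 π) (by fun_prop) fun t ht => ?_
    rw [interior_Icc] at ht
    rw [(hasDerivAt_sin_mul_two_add_cos_sub_mul_one_add_two_mul_cos t).deriv]
    have hsin_pos := sin_pos_of_pos_of_lt_pi ht.1 ht.2
    have hsin_lt := sin_lt ht.1
    nlinarith
  have h := hmono ⟨le_rfl, pi_pos.le⟩ ⟨h0.le, hπ⟩ h0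
  simp only [sin_zero, cos_zero, zero_mul, sub_zero] at h
  linarith

lemma mul_cos_lt_sin {θ : ℝ} (h0 : 0 < θ) (hπ : θ < π / 2) : θ * cos θ < sin θ := by
  have hcos := cos_pos_of_mem_Ioo ⟨by linarith, hπ⟩
  have htan := lt_tan h0 hπ
  rwa [tan_eq_sin_div_cos, lt_div_iff₀ hcos] at htan

lemma mul_sin_sub_mul_cos_add_sin_mul_cos_sub_pos {α θ : ℝ} (hα : 2 ≤ α) (h0 : 0 < θ)
    (hπ : θ < π / 2) : 0 < α * (sin θ - θ * cos θ) + (sin θ * cos θ - θ) := by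
  have hpos : 0 < sin θ - θ * cos θ := sub_pos.2 (mul_cos_lt_sin h0 hπ)
  have hkey := mul_one_add_two_mul_cos_lt_sin_mul_two_add_cos h0 (by linarith [pi_pos])
  nlinarith

end Real

lemma hasDerivAt_add_sqrt_one_sub_sq_mul_arcsin_div (α : ℝ) {x : ℝ} (hx0 : x ≠ 0)
    (hx : x ∈ Ioo (-1 : ℝ) 1) :
    HasDerivAt (fun y => (α + √(1 - y ^ 2)) * arcsin y / y)
      ((α * (x - arcsin x * √(1 - x ^ 2)) + (x * √(1 - x ^ 2) - arcsin x)) /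
        (√(1 - x ^ 2) * x ^ 2)) x := by
  have h1x2 : 0 < 1 - x ^ 2 := by nlinarith [hx.1, hx.2]
  have hc := sqrt_ne_zero'.2 h1x2
  have hsqrt : HasDerivAt (fun y => √(1 - y ^ 2)) (-(2 * x) / (2 * √(1 - x ^ 2))) x := by
    simpa using ((hasDerivAt_pow 2 x).const_sub 1).sqrt h1x2.ne'
  refine (((hasDerivAt_const x α).add hsqrt).mul
    (hasDerivAt_arcsin hx.1.ne' hx.2.ne)).div (hasDerivAt_id x) hx0 |>.congr_deriv ?_
  simp only [Pi.add_apply, Pi.mul_apply, id]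
  field_simp
  linear_combination (-arcsin x) * sq_sqrt h1x2.le

theorem stmt_6 (α : ℝ) (hα : 2 ≤ α) :
    StrictMonoOn (fun x : ℝ => (α + Real.sqrt (1 - x ^ 2)) * Real.arcsin x / x)
      (Set.Ioc 0 1) := by
  refine strictMonoOn_of_deriv_pos (convex_Ioc 0 1) ?_ fun x hx => ?_
  · exact ContinuousOn.div (by fun_prop) continuousOn_id fun x hx => hx.1.ne'
  rw [interior_Ioc] at hx
  obtain ⟨hx0, hx1⟩ := hx
  rw [(hasDerivAt_add_sqrt_one_sub_sq_mul_arcsin_div α hx0.ne' ⟨by linarith, hx1⟩).deriv]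
  have hθ := mul_sin_sub_mul_cos_add_sin_mul_cos_sub_pos hα (arcsin_pos.2 hx0)
    (arcsin_lt_pi_div_two.2 hx1)
  rw [sin_arcsin (by linarith) hx1.le, cos_arcsin] at hθ
  have hc : 0 < √(1 - x ^ 2) := sqrt_pos.2 (by nlinarith)
  exact div_pos (by linarith) (by positivity)
end

section
/- If α ≥ 2, then for all x with 0 ≤ x ≤ 1, (α+1)x / (α + √(1−x²)) ≤ arcsin x ≤ (πα/2)x / (α + √(1−x²)). -/
/-!
Put `θ = arcsin x`, so that `x = sin θ` and `√(1 - x²) = cos θ` with `θ ∈ [0, π/2]`; the two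
bounds become `(α + 1) sin θ ≤ θ (α + cos θ) ≤ (π α / 2) sin θ`. Both reduce to `α = 2`, since
increasing `α` adds `(α - 2)(θ - sin θ) ≥ 0` to the middle minus the left side and
`(α - 2)(π/2 · sin θ - θ) ≥ 0` (Jordan's inequality) to the right minus the middle side.
For `α = 2` the lower bound is the classical Shafer–Fink inequality: `θ (2 + cos θ) - 3 sin θ`
vanishes at `0` and has derivative `4 sin (θ/2) (sin (θ/2) - (θ/2) cos (θ/2)) ≥ 0`. For the upper
bound, `π sin θ - θ (2 + cos θ)` vanishes at `0` and `π/2` and is concave, its second derivative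
being `(2 - π) sin θ + θ cos θ ≤ (3 - π) sin θ`.
-/

open Real Set

namespace Real

lemma mul_cos_le_sin {t : ℝ} (h0 : 0 ≤ t) (hπ : t ≤ π) : t * cos t ≤ sin t := by
  rcases lt_or_ge t (π / 2) with ht | ht
  · have hcos : 0 < cos t := cos_pos_of_mem_Ioo ⟨by linarith [pi_pos], ht⟩
    have := le_tan h0 ht
    rwa [tan_eq_sin_div_cos, le_div_iff₀ hcos] at this
  · have hcos : cos t ≤ 0 := cos_nonpos_of_pi_div_two_le_of_le ht (by linarith)
    nlinarith [sin_nonneg_of_nonneg_of_le_pi h0 hπ]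

lemma three_mul_sin_le_mul_two_add_cos {θ : ℝ} (h0 : 0 ≤ θ) (h2π : θ ≤ 2 * π) :
    3 * sin θ ≤ θ * (2 + cos θ) := by
  let f : ℝ → ℝ := fun t ↦ t * (2 + cos t) - 3 * sin t
  have hf : ∀ t, HasDerivAt f (2 * (1 - cos t) - t * sin t) t := fun t ↦ by
    refine (((hasDerivAt_id' t).mul ((hasDerivAt_cos t).const_add 2)).sub
      ((hasDerivAt_sin t).const_mul 3)).congr_deriv ?_
    ring
  have hmono : MonotoneOn f (Icc 0 (2 * π)) := by
    refine monotoneOn_of_hasDerivWithinAt_nonneg (convex_Icc _ _)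
      (fun t _ ↦ (hf t).continuousAt.continuousWithinAt) (fun t _ ↦ (hf t).hasDerivWithinAt) ?_
    intro t ht
    rw [interior_Icc] at ht
    obtain ⟨ht0, ht2π⟩ := ht
    set u := t / 2
    have ht : t = 2 * u := by ring
    have hsin : 0 ≤ sin u := sin_nonneg_of_nonneg_of_le_pi (by linarith) (by linarith)
    have hcos : u * cos u ≤ sin u := mul_cos_le_sin (by linarith) (by linarith)
    rw [ht, sin_two_mul, cos_two_mul']
    nlinarith [sin_sq_add_cos_sq u, mul_nonneg hsin (sub_nonneg.2 hcos)]
  have := hmono ⟨le_rfl, by positivity⟩ ⟨h0, h2π⟩ h0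
  simp only [f, zero_mul, sin_zero, mul_zero, sub_zero] at this
  linarith

lemma mul_two_add_cos_le_pi_mul_sin {θ : ℝ} (h0 : 0 ≤ θ) (hπ : θ ≤ π / 2) :
    θ * (2 + cos θ) ≤ π * sin θ := by
  let g : ℝ → ℝ := fun t ↦ π * sin t - t * (2 + cos t)
  let g' : ℝ → ℝ := fun t ↦ π * cos t - (2 + cos t) + t * sin t
  have hg : ∀ t, HasDerivAt g (g' t) t := fun t ↦ by
    refine (((hasDerivAt_sin t).const_mul π).sub
      ((hasDerivAt_id' t).mul ((hasDerivAt_cos t).const_add 2))).congr_deriv ?_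
    ring
  have hg' : ∀ t, HasDerivAt g' ((2 - π) * sin t + t * cos t) t := fun t ↦ by
    refine ((((hasDerivAt_cos t).const_mul π).sub ((hasDerivAt_cos t).const_add 2)).add
      ((hasDerivAt_id' t).mul (hasDerivAt_sin t))).congr_deriv ?_
    ring
  have hconc : ConcaveOn ℝ (Icc 0 (π / 2)) g := by
    refine concaveOn_of_hasDerivWithinAt2_nonpos (convex_Icc _ _)
      (fun t _ ↦ (hg t).continuousAt.continuousWithinAt) (fun t _ ↦ (hg t).hasDerivWithinAt)
      (fun t _ ↦ (hg' t).hasDerivWithinAt) ?_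
    intro t ht
    rw [interior_Icc] at ht
    have hsin : 0 ≤ sin t := sin_nonneg_of_nonneg_of_le_pi ht.1.le (by linarith [ht.2, pi_pos])
    have hcos : t * cos t ≤ sin t := mul_cos_le_sin ht.1.le (by linarith [ht.2, pi_pos])
    nlinarith [pi_gt_three]
  have hπ0 : 0 ≤ π / 2 := by positivity
  have := hconc.ge_on_segment (left_mem_Icc.2 hπ0) (right_mem_Icc.2 hπ0)
    (by rw [segment_eq_Icc hπ0]; exact ⟨h0, hπ⟩)
  simp only [g, sin_zero, cos_pi_div_two, sin_pi_div_two] at this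
  norm_num at this
  linarith

lemma add_one_mul_sin_le {α θ : ℝ} (hα : 2 ≤ α) (h0 : 0 ≤ θ) (h2π : θ ≤ 2 * π) :
    (α + 1) * sin θ ≤ θ * (α + cos θ) := by
  nlinarith [three_mul_sin_le_mul_two_add_cos h0 h2π,
    mul_le_mul_of_nonneg_left (sin_le h0) (sub_nonneg.2 hα)]

lemma mul_add_cos_le {α θ : ℝ} (hα : 2 ≤ α) (h0 : 0 ≤ θ) (hπ : θ ≤ π / 2) :
    θ * (α + cos θ) ≤ π * α / 2 * sin θ := by
  have hjordan : θ ≤ π / 2 * sin θ := by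
    have := mul_le_sin h0 hπ
    rw [div_mul_eq_mul_div, div_le_iff₀ pi_pos] at this
    linarith
  nlinarith [mul_two_add_cos_le_pi_mul_sin h0 hπ,
    mul_le_mul_of_nonneg_left hjordan (sub_nonneg.2 hα)]

end Real

theorem stmt_9 (α : ℝ) (hα : 2 ≤ α) (x : ℝ) (hx : 0 ≤ x) (hx1 : x ≤ 1) :
    (α + 1) * x / (α + Real.sqrt (1 - x ^ 2)) ≤ Real.arcsin x ∧
    Real.arcsin x ≤ (Real.pi * α / 2) * x / (α + Real.sqrt (1 - x ^ 2)) := by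
  have h0 : 0 ≤ arcsin x := arcsin_nonneg.2 hx
  have hπ : arcsin x ≤ π / 2 := arcsin_le_pi_div_two x
  have hlower := add_one_mul_sin_le hα h0 (by linarith [pi_pos])
  have hupper := mul_add_cos_le hα h0 hπ
  rw [sin_arcsin (by linarith) hx1, cos_arcsin] at hlower hupper
  have hpos : 0 < α + √(1 - x ^ 2) := by positivity
  rw [div_le_iff₀ hpos, le_div_iff₀ hpos]
  exact ⟨hlower, hupper⟩
end

section
/- If π/2 < α < 2, then for all x with 0 ≤ x ≤ 1, 4(1 − 1/α²)x / (α + √(1−x²)) ≤ arcsin x ≤ max{πα/2, α+1} · x / (α + √(1−x²)). -/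
/-!
Put `x = sin θ` with `θ ∈ [0, π/2]`, so that `√(1 - x²) = cos θ`; both bounds become comparisons
of `θ (α + cos θ)` with a multiple of `sin θ`. The ratio `θ (α + cos θ) / sin θ` tends to `α + 1`
as `θ → 0` and equals `πα/2` at `θ = π/2`, which is where the constant of the upper bound comes
from. Each comparison is proved by replacing `sin` and `cos` with Taylor polynomials of the
appropriate side (the partial sums alternate around `sin` and `cos` on `[0, ∞)`), expanding in
`θ` on an initial segment and in `π/2 - θ` on the rest; what remains is a polynomial inequality
in `α` and the expansion variable.
-/

open Finset Real
open scoped Nat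

lemma nonneg_of_hasDerivAt_nonneg {f f' : ℝ → ℝ} (hf : ∀ t, HasDerivAt f (f' t) t)
    (hf' : ∀ t, 0 ≤ t → 0 ≤ f' t) (hf0 : f 0 = 0) {x : ℝ} (hx : 0 ≤ x) : 0 ≤ f x := by
  have hmono : MonotoneOn f (Set.Ici 0) :=
    monotoneOn_of_hasDerivWithinAt_nonneg (convex_Ici 0)
      (fun t _ => (hf t).continuousAt.continuousWithinAt)
      (fun t _ => (hf t).hasDerivWithinAt)
      (fun t ht => hf' t (interior_subset ht))
  simpa [hf0] using hmono Set.self_mem_Ici hx hx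

namespace Real

noncomputable def sinTaylor (n : ℕ) (x : ℝ) : ℝ :=
  ∑ k ∈ range n, (-1) ^ k * x ^ (2 * k + 1) / (2 * k + 1)!

noncomputable def cosTaylor (n : ℕ) (x : ℝ) : ℝ :=
  ∑ k ∈ range n, (-1) ^ k * x ^ (2 * k) / (2 * k)!

lemma hasDerivAt_sinTaylor (n : ℕ) (x : ℝ) :
    HasDerivAt (sinTaylor n) (cosTaylor n x) x := by
  unfold sinTaylor cosTaylor
  refine HasDerivAt.fun_sum fun k _ => ?_
  refine (((hasDerivAt_pow (2 * k + 1) x).const_mul ((-1 : ℝ) ^ k)).div_const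
    ((2 * k + 1)! : ℝ)).congr_deriv ?_
  rw [Nat.factorial_succ]
  push_cast
  field_simp

lemma hasDerivAt_cosTaylor_succ (n : ℕ) (x : ℝ) :
    HasDerivAt (cosTaylor (n + 1)) (-sinTaylor n x) x := by
  have h : cosTaylor (n + 1) =
      fun y => ∑ k ∈ range n, (-1 : ℝ) ^ (k + 1) * y ^ (2 * k + 2) / (2 * k + 2)! + 1 := by
    funext y
    simp [cosTaylor, sum_range_succ', mul_add]
  rw [h, sinTaylor, ← sum_neg_distrib]
  refine (HasDerivAt.fun_sum fun k _ => ?_).add_const 1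
  refine (((hasDerivAt_pow (2 * k + 2) x).const_mul ((-1 : ℝ) ^ (k + 1))).div_const
    ((2 * k + 2)! : ℝ)).congr_deriv ?_
  rw [Nat.factorial_succ (2 * k + 1)]
  push_cast
  field_simp
  ring

lemma cos_sin_taylor_alternating {x : ℝ} (hx : 0 ≤ x) (n : ℕ) :
    0 ≤ (-1) ^ (n + 1) * (cos x - cosTaylor (n + 1) x) ∧
      0 ≤ (-1) ^ (n + 1) * (sin x - sinTaylor (n + 1) x) := by
  induction n generalizing x with
  | zero => simp [cosTaylor, sinTaylor, cos_le_one, sin_le hx]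
  | succ n ih =>
    have hcos : ∀ t, 0 ≤ t → 0 ≤ (-1) ^ (n + 2) * (cos t - cosTaylor (n + 2) t) :=
      fun t ht => nonneg_of_hasDerivAt_nonneg
        (fun t => (((hasDerivAt_cos t).sub (hasDerivAt_cosTaylor_succ (n + 1) t)).const_mul
          ((-1 : ℝ) ^ (n + 2))).congr_deriv (by ring))
        (fun t ht => (ih ht).2) (by simp [cosTaylor, sum_range_succ']) ht
    refine ⟨hcos x hx, nonneg_of_hasDerivAt_nonneg
      (fun t => (((hasDerivAt_sin t).sub (hasDerivAt_sinTaylor (n + 2) t)).const_mul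
        ((-1 : ℝ) ^ (n + 2))))
      hcos (by simp [sinTaylor]) hx⟩

lemma cos_le_taylor_four {x : ℝ} (hx : 0 ≤ x) : cos x ≤ 1 - x ^ 2 / 2 + x ^ 4 / 24 := by
  have h := (cos_sin_taylor_alternating hx 2).1
  norm_num [cosTaylor, sum_range_succ, Nat.factorial] at h
  linarith

lemma sin_le_taylor_five {x : ℝ} (hx : 0 ≤ x) : sin x ≤ x - x ^ 3 / 6 + x ^ 5 / 120 := by
  have h := (cos_sin_taylor_alternating hx 2).2
  norm_num [sinTaylor, sum_range_succ, Nat.factorial] at h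
  linarith

lemma taylor_six_le_cos {x : ℝ} (hx : 0 ≤ x) :
    1 - x ^ 2 / 2 + x ^ 4 / 24 - x ^ 6 / 720 ≤ cos x := by
  have h := (cos_sin_taylor_alternating hx 3).1
  norm_num [cosTaylor, sum_range_succ, Nat.factorial] at h
  linarith

lemma taylor_seven_le_sin {x : ℝ} (hx : 0 ≤ x) :
    x - x ^ 3 / 6 + x ^ 5 / 120 - x ^ 7 / 5040 ≤ sin x := by
  have h := (cos_sin_taylor_alternating hx 3).2
  norm_num [sinTaylor, sum_range_succ, Nat.factorial] at h
  linarith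

lemma four_mul_one_sub_inv_sq_mul_sin_le {α θ : ℝ} (hα : π / 2 < α) (hα2 : α ≤ 2)
    (hθ0 : 0 ≤ θ) (hθ : θ ≤ π / 2) : 4 * (1 - 1 / α ^ 2) * sin θ ≤ θ * (α + cos θ) := by
  have hπ := pi_lt_d6
  have hπ' := pi_gt_d6
  -- the Taylor bounds leave θ / 720 times this cubic in t = θ²
  have key : ∀ t : ℝ, 0 ≤ t → t ≤ 2.4675 →
      0 ≤ 720 * α ^ 3 - 2160 * α ^ 2 + 2880 + (120 * α ^ 2 - 480) * t + (6 * α ^ 2 + 24) * t ^ 2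
        - α ^ 2 * t ^ 3 := fun t ht0 ht1 => by
    nlinarith [sq_nonneg (6 * (2 - α) - t), sq_nonneg (12 * (2 - α) - t),
      mul_nonneg (sub_nonneg.2 hα2) ht0, mul_nonneg (mul_nonneg (sub_nonneg.2 hα2) ht0) ht0,
      sq_nonneg (2 - α), sq_nonneg t, mul_nonneg (mul_nonneg ht0 ht0) (sub_nonneg.2 ht1),
      sq_nonneg ((2 - α) * t)]
  have hs := mul_le_mul_of_nonneg_left (sin_le_taylor_five hθ0)
    (by nlinarith : (0 : ℝ) ≤ 4 * (α ^ 2 - 1))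
  have hc := mul_le_mul_of_nonneg_left (taylor_six_le_cos hθ0) (mul_nonneg (sq_nonneg α) hθ0)
  have hpoly : 4 * (α ^ 2 - 1) * sin θ ≤ α ^ 2 * (θ * (α + cos θ)) := by
    linarith [mul_nonneg hθ0 (key (θ ^ 2) (sq_nonneg θ) (by nlinarith))]
  have hα0 : 0 < α ^ 2 := by nlinarith
  calc 4 * (1 - 1 / α ^ 2) * sin θ = 4 * (α ^ 2 - 1) * sin θ / α ^ 2 := by
        rw [one_sub_div hα0.ne']; ring
    _ ≤ θ * (α + cos θ) := by rwa [div_le_iff₀' hα0]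

lemma mul_add_cos_le_add_one_mul_sin {α θ : ℝ} (hα : π / 2 < α) (hαπ : π * α / 2 ≤ α + 1)
    (hθ0 : 0 ≤ θ) (hθ : θ ≤ π / 2) : θ * (α + cos θ) ≤ (α + 1) * sin θ := by
  have hπ := pi_lt_d6
  have hπ' := pi_gt_d6
  have hα2 : α ≤ 1.752 := by nlinarith
  rcases le_total θ 1.29 with hθ1 | hθ1
  · have key : ∀ t : ℝ, 0 ≤ t → t ≤ 1.6641 →
        0 ≤ 840 * (2 - α) - 42 * t * (4 - α) - (α + 1) * t ^ 2 := fun t ht0 ht1 => by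
      nlinarith [mul_nonneg ht0 (sub_nonneg.2 hα2)]
    have hs := mul_le_mul_of_nonneg_left (taylor_seven_le_sin hθ0) (by linarith : 0 ≤ α + 1)
    have hc := mul_le_mul_of_nonneg_left (cos_le_taylor_four hθ0) hθ0
    linarith [mul_nonneg (pow_nonneg hθ0 3) (key (θ ^ 2) (sq_nonneg θ) (by nlinarith))]
  · obtain ⟨δ, hδ0, hδ1, rfl⟩ : ∃ δ, 0 ≤ δ ∧ δ ≤ 0.281 ∧ θ = π / 2 - δ :=
      ⟨π / 2 - θ, by linarith, by linarith, by ring⟩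
    rw [sin_pi_div_two_sub, cos_pi_div_two_sub]
    have hs := mul_le_mul_of_nonneg_left (sin_le hδ0) hθ0
    have hc := mul_le_mul_of_nonneg_left (one_sub_sq_div_two_le_cos (x := δ))
      (by linarith : 0 ≤ α + 1)
    have hgap : 0 ≤ α + 1 - π * α / 2 := by linarith
    have hα' : 0 ≤ α - π / 2 := by linarith
    nlinarith [mul_nonneg hδ0 hgap, mul_nonneg (sub_nonneg.2 hδ1) hgap, mul_nonneg hδ0 hα',
      mul_nonneg (mul_nonneg hδ0 (sub_nonneg.2 hδ1)) (by linarith : (0 : ℝ) ≤ α - 1),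
      mul_nonneg (sub_nonneg.2 hδ1) hα', sq_nonneg δ]

lemma mul_add_cos_le_pi_mul_div_two_mul_sin {α θ : ℝ} (hαπ : α + 1 ≤ π * α / 2) (hα2 : α < 2)
    (hθ0 : 0 ≤ θ) (hθ : θ ≤ π / 2) : θ * (α + cos θ) ≤ π * α / 2 * sin θ := by
  have hπ := pi_lt_d6
  have hπ' := pi_gt_d6
  have hα1 : 1.7519 ≤ α := by nlinarith
  have hgap : 0 ≤ π * α / 2 - α - 1 := by linarith
  have hM : 0 ≤ π * α / 2 := by nlinarith
  rcases le_total θ 0.8 with hθ1 | hθ1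
  · have key : ∀ t : ℝ, 0 ≤ t → t ≤ 0.64 →
        0 ≤ (π * α / 2 - α - 1) + t * (1 / 2 - π * α / 12) - t ^ 2 / 24 := fun t ht0 ht1 => by
      nlinarith [mul_nonneg ht0 hgap, mul_nonneg (sub_nonneg.2 ht1) hgap,
        mul_nonneg ht0 (sub_nonneg.2 hα2.le), mul_nonneg (sub_nonneg.2 ht1) ht0]
    have hs := mul_le_mul_of_nonneg_left (sin_ge_sub_cube hθ0) hM
    have hc := mul_le_mul_of_nonneg_left (cos_le_taylor_four hθ0) hθ0
    linarith [mul_nonneg hθ0 (key (θ ^ 2) (sq_nonneg θ) (by nlinarith))]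
  · obtain ⟨δ, hδ0, hδ1, rfl⟩ : ∃ δ, 0 ≤ δ ∧ δ ≤ 0.7708 ∧ θ = π / 2 - δ :=
      ⟨π / 2 - θ, by linarith, by linarith, by ring⟩
    rw [sin_pi_div_two_sub, cos_pi_div_two_sub]
    have key : 0 ≤ (α - π / 2) + δ * (1 - π * α / 4) + π / 12 * δ ^ 2 + δ ^ 3 * (π * α / 48 - 1 / 6)
        - π / 240 * δ ^ 4 + δ ^ 5 * (1 / 120 - π * α / 1440) := by
      have hδ2 := mul_nonneg hδ0 hδ0
      have hδ3 := mul_nonneg hδ2 hδ0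
      have hδ4 := mul_nonneg hδ3 hδ0
      nlinarith [mul_nonneg hδ0 hgap, mul_nonneg (sub_nonneg.2 hδ1) hgap,
        mul_nonneg hδ0 (by linarith : (0 : ℝ) ≤ α - π / 2), mul_nonneg hδ4 hδ0,
        mul_nonneg hδ2 (sub_nonneg.2 hδ1), mul_nonneg hδ3 (sub_nonneg.2 hδ1),
        mul_nonneg (mul_nonneg hδ0 (sub_nonneg.2 hδ1)) (by linarith : (0 : ℝ) ≤ α - 1.7519),
        mul_nonneg hδ2 (by linarith : (0 : ℝ) ≤ α - 1.7519),
        mul_nonneg hδ2 (by linarith : (0 : ℝ) ≤ 2 - α)]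
    have hs := mul_le_mul_of_nonneg_left (sin_le_taylor_five hδ0) hθ0
    have hc := mul_le_mul_of_nonneg_left (taylor_six_le_cos hδ0) hM
    linarith [mul_nonneg hδ0 key]

lemma mul_add_cos_le_max_mul_sin {α θ : ℝ} (hα : π / 2 < α) (hα2 : α < 2) (hθ0 : 0 ≤ θ)
    (hθ : θ ≤ π / 2) : θ * (α + cos θ) ≤ max (π * α / 2) (α + 1) * sin θ := by
  rcases le_total (π * α / 2) (α + 1) with h | h
  · rw [max_eq_right h]
    exact mul_add_cos_le_add_one_mul_sin hα h hθ0 hθ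
  · rw [max_eq_left h]
    exact mul_add_cos_le_pi_mul_div_two_mul_sin h hα2 hθ0 hθ

end Real

theorem stmt_11 (α : ℝ) (h1 : Real.pi / 2 < α) (h2 : α < 2)
    (x : ℝ) (hx : 0 ≤ x) (hx1 : x ≤ 1) :
    4 * (1 - 1 / α ^ 2) * x / (α + Real.sqrt (1 - x ^ 2)) ≤ Real.arcsin x ∧
    Real.arcsin x ≤ max (Real.pi * α / 2) (α + 1) * x / (α + Real.sqrt (1 - x ^ 2)) := by
  have hθ0 : 0 ≤ arcsin x := arcsin_nonneg.2 hx
  have hθ : arcsin x ≤ π / 2 := arcsin_le_pi_div_two x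
  have hsin : sin (arcsin x) = x := sin_arcsin (by linarith) hx1
  have hcos : cos (arcsin x) = √(1 - x ^ 2) := cos_arcsin x
  have hd : 0 < α + √(1 - x ^ 2) := by linarith [pi_pos, sqrt_nonneg (1 - x ^ 2)]
  have hlower := four_mul_one_sub_inv_sq_mul_sin_le h1 h2.le hθ0 hθ
  have hupper := mul_add_cos_le_max_mul_sin h1 h2 hθ0 hθ
  rw [hsin, hcos] at hlower hupper
  rw [div_le_iff₀ hd, le_div_iff₀ hd]
  exact ⟨hlower, hupper⟩
end
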